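/- In the GRW specialization of the pointwise model with g(P,P) = −1, ω = 1, and Ric(P,X) = (n−1)·π(X) for all X ∈ V: the Einstein type condition of the fifth kind Ric⁵ = (r⁵/n)·g holds if and only if Ric = ((n−1)/2)·(3g + π⊗π); and in that case the scalar curvature is the constant 2r = (n−1)(3n−1). -/

import Mathlib

/-!
Write `c = (n-1)/2`. Since `ω = 1` and `π(P) = -1`, `Ric⁵ = Ric - (n-1) g - c π⊗π`, and
`Ric(P,P) = -(n-1)` gives `Ric⁵(P,P) = -c`. A bilinear form equals `(tr_g B / n) g` exactly when
it is a multiple of `g`, and evaluating at the unit timelike `P` forces that multiple to be `c`.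
So the Einstein condition reads `Ric⁵ = c g`, i.e. `Ric = c (3g + π⊗π)`; taking the `g`-trace,
with `tr_g g = n` and `tr_g (π⊗π) = g(P,P) = -1`, gives `r = c (3n - 1)`.
-/

/-- The `g`-trace of a bilinear form `B`: the trace of the endomorphism
`(g♭)⁻¹ ∘ B♭` of `V`, where `B♭ : V → V*` is `X ↦ B(X,·)`. -/
noncomputable def trG {V : Type*} [AddCommGroup V] [Module ℝ V] [FiniteDimensional ℝ V]
    (g : LinearMap.BilinForm ℝ V) (hg : g.Nondegenerate)
    (B : LinearMap.BilinForm ℝ V) : ℝ :=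
  LinearMap.trace ℝ V ((g.toDual hg).symm.toLinearMap ∘ₗ B)
section

variable {V : Type*} [AddCommGroup V] [Module ℝ V] [FiniteDimensional ℝ V]
  {g : LinearMap.BilinForm ℝ V} (hg : g.Nondegenerate)

theorem trG_add (B C : LinearMap.BilinForm ℝ V) : trG g hg (B + C) = trG g hg B + trG g hg C := by
  rw [trG, LinearMap.comp_add, map_add]; rfl

theorem trG_smul (a : ℝ) (B : LinearMap.BilinForm ℝ V) : trG g hg (a • B) = a * trG g hg B := by
  rw [trG, LinearMap.comp_smul, map_smul, smul_eq_mul]; rfl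

theorem trG_self : trG g hg g = Module.finrank ℝ V := by
  have : (g.toDual hg).symm.toLinearMap ∘ₗ g = LinearMap.id := by
    ext x
    exact (g.toDual hg).symm_apply_apply x
  rw [trG, this, LinearMap.trace_id]

theorem trG_smulRight (φ ψ : Module.Dual ℝ V) :
    trG g hg (φ.smulRight ψ) = φ ((g.toDual hg).symm ψ) := by
  have : (g.toDual hg).symm.toLinearMap ∘ₗ φ.smulRight ψ =
      dualTensorHom ℝ V V (φ ⊗ₜ (g.toDual hg).symm ψ) := by
    ext x
    simp [dualTensorHom_apply]
  rw [trG, this, LinearMap.trace_eq_contract_apply, contractLeft_apply]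

theorem LinearMap.BilinForm.IsSymm.toDual_symm_flip (hgs : g.IsSymm) (P : V) :
    (g.toDual hg).symm (g.flip P) = P := by
  rw [LinearEquiv.symm_apply_eq]
  ext X
  exact (hgs.eq P X).symm

theorem eq_trG_div_finrank_smul_iff (B : LinearMap.BilinForm ℝ V) :
    B = (trG g hg B / Module.finrank ℝ V) • g ↔ ∃ a : ℝ, B = a • g := by
  refine ⟨fun h => ⟨_, h⟩, ?_⟩
  rintro ⟨a, rfl⟩
  rcases eq_or_ne (Module.finrank ℝ V) 0 with h0 | h0
  · have := Module.finrank_zero_iff.mp h0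
    ext x y
    simp [Subsingleton.elim x 0]
  · rw [trG_smul, trG_self, mul_div_cancel_right₀ _ (by exact_mod_cast h0)]

end

theorem stmt_14_general {V : Type*} [AddCommGroup V] [Module ℝ V] [FiniteDimensional ℝ V]
    (n : ℕ) (hdim : Module.finrank ℝ V = n)
    (g : LinearMap.BilinForm ℝ V) (hg : g.Nondegenerate) (hgs : g.IsSymm)
    (P : V) (hP : g P P = -1) (π : V →ₗ[ℝ] ℝ) (hπ : π = g.flip P)
    (ω : ℝ) (hω : ω = 1)
    (ππ : LinearMap.BilinForm ℝ V) (hππ : ππ = π.smulRight π)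
    (Ric : LinearMap.BilinForm ℝ V)
    (hRicP : ∀ X : V, Ric P X = ((n : ℝ) - 1) * π X)
    (Ric5 : LinearMap.BilinForm ℝ V)
    (hRic5 : Ric5 = Ric - ((((n : ℝ) - 1) / 2) * (3 * ω + π P)) • g - (((n : ℝ) - 1) / 2) • ππ) :
    (Ric5 = (trG g hg Ric5 / (n : ℝ)) • g ↔
      Ric = (((n : ℝ) - 1) / 2) • ((3 : ℝ) • g + ππ)) ∧
    (Ric5 = (trG g hg Ric5 / (n : ℝ)) • g →
      2 * trG g hg Ric = ((n : ℝ) - 1) * (3 * (n : ℝ) - 1)) := by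
  set c : ℝ := ((n : ℝ) - 1) / 2
  have hπP : π P = -1 := by rw [hπ]; exact hP
  have hRic5' : Ric5 = Ric - ((n : ℝ) - 1) • g - c • ππ := by
    rw [hRic5, hω, hπP]; congr 3; ring
  have hRic5PP : Ric5 P P = -c := by
    simp only [hRic5', LinearMap.sub_apply, LinearMap.smul_apply, hRicP, hP, hππ,
      LinearMap.smulRight_apply, hπP, smul_eq_mul]
    ring
  have hEinstein : Ric5 = (trG g hg Ric5 / n) • g ↔ Ric5 = c • g := by
    rw [← hdim, eq_trG_div_finrank_smul_iff]
    refine ⟨?_, fun h => ⟨c, h⟩⟩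
    rintro ⟨a, ha⟩
    have haPP : Ric5 P P = -a := by simp [ha, hP]
    rwa [show a = c by linarith] at ha
  have hRic : Ric5 = c • g ↔ Ric = c • ((3 : ℝ) • g + ππ) := by
    have hRic_eq : Ric = Ric5 + ((n : ℝ) - 1) • g + c • ππ := by rw [hRic5']; abel
    constructor
    · intro h
      rw [hRic_eq, h]
      module
    · intro h
      rw [hRic5', h]
      module
  have hcond := hEinstein.trans hRic
  refine ⟨hcond, fun h => ?_⟩
  have htrππ : trG g hg ππ = -1 := by
    rw [hππ, hπ, trG_smulRight, hgs.toDual_symm_flip hg, ← hπ, hπP]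
  rw [hcond.mp h, trG_smul, trG_add, trG_smul, trG_self, hdim, htrππ]
  ring

theorem stmt_14 {V : Type*} [AddCommGroup V] [Module ℝ V] [FiniteDimensional ℝ V]
    (n : ℕ) (hn : 3 ≤ n) (hdim : Module.finrank ℝ V = n)
    (g : LinearMap.BilinForm ℝ V) (hg : g.Nondegenerate) (hgs : g.IsSymm)
    (P : V) (hP : g P P = -1) (π : V →ₗ[ℝ] ℝ) (hπ : π = g.flip P)
    (ω : ℝ) (hω : ω = 1)
    (ππ : LinearMap.BilinForm ℝ V) (hππ : ππ = π.smulRight π)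
    (Ric : LinearMap.BilinForm ℝ V) (hRicSymm : Ric.IsSymm)
    (hRicP : ∀ X : V, Ric P X = ((n : ℝ) - 1) * π X)
    (Ric5 : LinearMap.BilinForm ℝ V)
    (hRic5 : Ric5 = Ric - ((((n : ℝ) - 1) / 2) * (3 * ω + π P)) • g - (((n : ℝ) - 1) / 2) • ππ) :
    (Ric5 = (trG g hg Ric5 / (n : ℝ)) • g ↔
      Ric = (((n : ℝ) - 1) / 2) • ((3 : ℝ) • g + ππ)) ∧
    (Ric5 = (trG g hg Ric5 / (n : ℝ)) • g →
      2 * trG g hg Ric = ((n : ℝ) - 1) * (3 * (n : ℝ) - 1)) :=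
  stmt_14_general n hdim g hg hgs P hP π hπ ω hω ππ hππ Ric hRicP Ric5 hRic5
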